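/- For every separability-preserving superchannel Θ taking bipartite channels on AB to bipartite channels on A'B', and for every bipartite quantum channel N from A₀B₀ to A₁B₁, the standard robustness satisfies R_s(Θ[N]) ≤ R_s(N) and the generalized robustness satisfies R(Θ[N]) ≤ R(N). -/

import Mathlib

open scoped BigOperators Kronecker ComplexOrder
open Matrix Filter

noncomputable section

namespace DynEnt

/-- A (not necessarily linear) map between matrix spaces. -/
abbrev MatMap (ι₀ ι₁ : Type) : Type := Matrix ι₀ ι₀ ℂ → Matrix ι₁ ι₁ ℂ

/-- The map `L ⊗ id_ρ`, acting trivially on a reference system indexed by `ρ`. -/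
def tensorIdT {ι₀ ι₁ ρ : Type} (L : MatMap ι₀ ι₁)
    (X : Matrix (ι₀ × ρ) (ι₀ × ρ) ℂ) : Matrix (ι₁ × ρ) (ι₁ × ρ) ℂ :=
  Matrix.of fun p q => L (Matrix.of fun i j => X (i, p.2) (j, q.2)) p.1 q.1

def IsLinearFun {ι₀ ι₁ : Type} (L : MatMap ι₀ ι₁) : Prop :=
  ∀ (c : ℂ) (X Y : Matrix ι₀ ι₀ ℂ), L (c • X + Y) = c • L X + L Y

def IsCompletelyPositive {ι₀ ι₁ : Type} [Fintype ι₀] [Fintype ι₁] (L : MatMap ι₀ ι₁) : Prop :=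
  ∀ (r : ℕ) (X : Matrix (ι₀ × Fin r) (ι₀ × Fin r) ℂ), X.PosSemidef → (tensorIdT L X).PosSemidef

def IsTracePreserving {ι₀ ι₁ : Type} [Fintype ι₀] [Fintype ι₁] (L : MatMap ι₀ ι₁) : Prop :=
  ∀ X, (L X).trace = X.trace

/-- A quantum channel: a linear, completely positive, trace-preserving map. -/
def IsChannel {ι₀ ι₁ : Type} [Fintype ι₀] [Fintype ι₁] (L : MatMap ι₀ ι₁) : Prop :=
  IsLinearFun L ∧ IsCompletelyPositive L ∧ IsTracePreserving L

/-- Tensor product of two matrix maps, defined on matrix units and extended linearly. -/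
def tensorMap {α₀ α₁ β₀ β₁ : Type} [Fintype α₀] [DecidableEq α₀] [Fintype β₀] [DecidableEq β₀]
    (LA : MatMap α₀ α₁) (LB : MatMap β₀ β₁) : MatMap (α₀ × β₀) (α₁ × β₁) :=
  fun X => ∑ i : α₀, ∑ j : α₀, ∑ k : β₀, ∑ l : β₀,
    X (i, k) (j, l) • (LA (Matrix.single i j 1) ⊗ₖ LB (Matrix.single k l 1))

/-- Separable bipartite channel (cut `α : β`). -/
def IsSepChannel {α₀ β₀ α₁ β₁ : Type}
    [Fintype α₀] [DecidableEq α₀] [Fintype β₀] [DecidableEq β₀] [Fintype α₁] [Fintype β₁]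
    (N : MatMap (α₀ × β₀) (α₁ × β₁)) : Prop :=
  IsChannel N ∧ ∃ (n : ℕ) (LA : Fin n → MatMap α₀ α₁) (LB : Fin n → MatMap β₀ β₁),
    (∀ k, IsLinearFun (LA k) ∧ IsCompletelyPositive (LA k) ∧
          IsLinearFun (LB k) ∧ IsCompletelyPositive (LB k)) ∧
    ∀ X, N X = ∑ k, tensorMap (LA k) (LB k) X

/-- The square root of a positive semidefinite matrix, as `Matrix.PosSemidef.sqrt` was defined in the older Mathlib. -/
def psdSqrt {ι : Type} [Fintype ι] [DecidableEq ι] {A : Matrix ι ι ℂ} (hA : A.PosSemidef) :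
    Matrix ι ι ℂ :=
  (hA.1.eigenvectorUnitary : Matrix ι ι ℂ) *
    Matrix.diagonal ((↑) ∘ (fun x : ℝ => Real.sqrt x) ∘ hA.1.eigenvalues) *
    (star hA.1.eigenvectorUnitary : Matrix ι ι ℂ)

/-- Trace norm `‖X‖₁ = tr √(X† X)`. -/
def traceNorm {ι : Type} [Fintype ι] [DecidableEq ι] (X : Matrix ι ι ℂ) : ℝ :=
  (psdSqrt (Matrix.posSemidef_conjTranspose_mul_self X)).trace.re

/-- Density matrix. -/
def IsState {ι : Type} [Fintype ι] (ρ : Matrix ι ι ℂ) : Prop :=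
  ρ.PosSemidef ∧ ρ.trace = 1

/-- Pure state (rank-one density matrix). -/
def IsPureState {ι : Type} [Fintype ι] (ρ : Matrix ι ι ℂ) : Prop :=
  ∃ v : ι → ℂ, (∑ i, Complex.normSq (v i)) = 1 ∧
    ρ = Matrix.vecMulVec v (fun i => star (v i))

/-- Diamond norm. -/
def diamondNorm {ι₀ ι₁ : Type} [Fintype ι₀] [Fintype ι₁] [DecidableEq ι₁]
    (L : MatMap ι₀ ι₁) : ℝ :=
  sSup { t : ℝ | ∃ (r : ℕ) (ρ : Matrix (ι₀ × Fin r) (ι₀ × Fin r) ℂ),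
    ρ.PosSemidef ∧ ρ.trace = 1 ∧ t = traceNorm (tensorIdT L ρ) }

section Bipartite

variable {α₀ β₀ α₁ β₁ α₀' β₀' α₁' β₁' : Type}
variable [Fintype α₀] [DecidableEq α₀] [Fintype β₀] [DecidableEq β₀]
variable [Fintype α₁] [DecidableEq α₁] [Fintype β₁] [DecidableEq β₁]
variable [Fintype α₀'] [DecidableEq α₀'] [Fintype β₀'] [DecidableEq β₀']
variable [Fintype α₁'] [DecidableEq α₁'] [Fintype β₁'] [DecidableEq β₁']

/-- Standard robustness w.r.t. separable channels. -/
def stdRobustness (N : MatMap (α₀ × β₀) (α₁ × β₁)) : ℝ :=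
  sInf { s : ℝ | 0 ≤ s ∧ ∃ M : MatMap (α₀ × β₀) (α₁ × β₁), IsSepChannel M ∧
    IsSepChannel (fun X => (1 + s)⁻¹ • (N X + s • M X)) }

/-- Generalized robustness w.r.t. separable channels. -/
def genRobustness (N : MatMap (α₀ × β₀) (α₁ × β₁)) : ℝ :=
  sInf { s : ℝ | 0 ≤ s ∧ ∃ M : MatMap (α₀ × β₀) (α₁ × β₁), IsChannel M ∧
    IsSepChannel (fun X => (1 + s)⁻¹ • (N X + s • M X)) }

/-- Standard log-robustness. -/
def LRs (N : MatMap (α₀ × β₀) (α₁ × β₁)) : ℝ := Real.logb 2 (1 + stdRobustness N)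

/-- Generalized log-robustness. -/
def LRgen (N : MatMap (α₀ × β₀) (α₁ × β₁)) : ℝ := Real.logb 2 (1 + genRobustness N)

/-- Smooth standard log-robustness. -/
def smoothLRs (ε : ℝ) (N : MatMap (α₀ × β₀) (α₁ × β₁)) : ℝ :=
  sInf { t : ℝ | ∃ N' : MatMap (α₀ × β₀) (α₁ × β₁), IsChannel N' ∧
    (1/2) * diamondNorm (fun X => N' X - N X) ≤ ε ∧ t = LRs N' }

/-- Smooth generalized log-robustness. -/
def smoothLRgen (ε : ℝ) (N : MatMap (α₀ × β₀) (α₁ × β₁)) : ℝ :=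
  sInf { t : ℝ | ∃ N' : MatMap (α₀ × β₀) (α₁ × β₁), IsChannel N' ∧
    (1/2) * diamondNorm (fun X => N' X - N X) ≤ ε ∧ t = LRgen N' }

end Bipartite

/-- A superchannel, given by pre- and post-processing channels with a memory system `Fin e`. -/
structure Superchannel (α₀ β₀ α₁ β₁ α₀' β₀' α₁' β₁' : Type)
    [Fintype α₀] [Fintype β₀] [Fintype α₁] [Fintype β₁]
    [Fintype α₀'] [Fintype β₀'] [Fintype α₁'] [Fintype β₁'] : Type where
  e : ℕ
  pre : MatMap (α₀' × β₀') ((α₀ × β₀) × Fin e)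
  post : MatMap ((α₁ × β₁) × Fin e) (α₁' × β₁')
  pre_channel : IsChannel pre
  post_channel : IsChannel post

section Super

variable {α₀ β₀ α₁ β₁ α₀' β₀' α₁' β₁' : Type}
variable [Fintype α₀] [DecidableEq α₀] [Fintype β₀] [DecidableEq β₀]
variable [Fintype α₁] [DecidableEq α₁] [Fintype β₁] [DecidableEq β₁]
variable [Fintype α₀'] [DecidableEq α₀'] [Fintype β₀'] [DecidableEq β₀']
variable [Fintype α₁'] [DecidableEq α₁'] [Fintype β₁'] [DecidableEq β₁']

/-- Action of a superchannel on a channel: `Θ[E] = post ∘ (E ⊗ id) ∘ pre`. -/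
def Superchannel.apply (Θ : Superchannel α₀ β₀ α₁ β₁ α₀' β₀' α₁' β₁')
    (E : MatMap (α₀ × β₀) (α₁ × β₁)) : MatMap (α₀' × β₀') (α₁' × β₁') :=
  fun X => Θ.post (tensorIdT E (Θ.pre X))

/-- Separability-preserving superchannel. -/
def IsSEPPSC (Θ : Superchannel α₀ β₀ α₁ β₁ α₀' β₀' α₁' β₁') : Prop :=
  ∀ M : MatMap (α₀ × β₀) (α₁ × β₁), IsSepChannel M → IsSepChannel (Θ.apply M)

/-- δ-separability-preserving superchannel. -/
def IsDeltaSEPPSC (δ : ℝ) (Θ : Superchannel α₀ β₀ α₁ β₁ α₀' β₀' α₁' β₁') : Prop :=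
  ∀ M : MatMap (α₀ × β₀) (α₁ × β₁), IsSepChannel M → genRobustness (Θ.apply M) ≤ δ

end Super

/-- The swap unitary `F = Σ |ij⟩⟨ji|` on `ℂ^K ⊗ ℂ^K`. -/
def swapMatrix (K : ℕ) : Matrix (Fin K × Fin K) (Fin K × Fin K) ℂ :=
  Matrix.of fun p q => if p.1 = q.2 ∧ p.2 = q.1 then 1 else 0

/-- The `K`-swap channel `X ↦ F X F†`. -/
def swapChannel (K : ℕ) : MatMap (Fin K × Fin K) (Fin K × Fin K) :=
  fun X => swapMatrix K * X * (swapMatrix K)ᴴ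

/-- The density matrix of the `K`-maximally entangled state inside `ℂ^{dA} ⊗ ℂ^{dB}`. -/
def maxEntangled (dA dB K : ℕ) : Matrix (Fin dA × Fin dB) (Fin dA × Fin dB) ℂ :=
  Matrix.of fun p q =>
    if (p.1 : ℕ) = (p.2 : ℕ) ∧ (q.1 : ℕ) = (q.2 : ℕ) ∧ (p.1 : ℕ) < K ∧ (q.1 : ℕ) < K
    then (1 / K : ℂ) else 0

/-- Separable bipartite state. -/
def IsSepState {ιA ιB : Type} [Fintype ιA] [Fintype ιB]
    (σ : Matrix (ιA × ιB) (ιA × ιB) ℂ) : Prop :=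
  ∃ (n : ℕ) (p : Fin n → ℝ) (φ : Fin n → ιA → ℂ) (ψ : Fin n → ιB → ℂ),
    (∀ a, 0 ≤ p a) ∧ (∑ a, p a) = 1 ∧
    (∀ a, (∑ i, Complex.normSq (φ a i)) = 1) ∧
    (∀ a, (∑ i, Complex.normSq (ψ a i)) = 1) ∧
    σ = ∑ a, (p a : ℂ) •
      (Matrix.vecMulVec (φ a) (fun i => star (φ a i)) ⊗ₖ
       Matrix.vecMulVec (ψ a) (fun i => star (ψ a i)))

/-- Input state `Φ^{a₀}_{A₀Ã₀} ⊗ Φ^{b₀}_{B₀B̃₀}` for the Choi matrix, with index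
grouping `(A₀ × B₀) × (Ã₀ × B̃₀)`. -/
def choiInput (a₀ b₀ : ℕ) :
    Matrix ((Fin a₀ × Fin b₀) × (Fin a₀ × Fin b₀)) ((Fin a₀ × Fin b₀) × (Fin a₀ × Fin b₀)) ℂ :=
  Matrix.of fun p q =>
    maxEntangled a₀ a₀ a₀ (p.1.1, p.2.1) (q.1.1, q.2.1) *
    maxEntangled b₀ b₀ b₀ (p.1.2, p.2.2) (q.1.2, q.2.2)

/-- Normalized Choi matrix of a bipartite channel. -/
def choiBi {a₀ b₀ : ℕ} {ι₁ : Type} (E : MatMap (Fin a₀ × Fin b₀) ι₁) :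
    Matrix (ι₁ × (Fin a₀ × Fin b₀)) (ι₁ × (Fin a₀ × Fin b₀)) ℂ :=
  tensorIdT E (choiInput a₀ b₀)

/-- Normalized Choi matrix of a single-system channel. -/
def choi1 {d : ℕ} {ι₁ : Type} (N : MatMap (Fin d) ι₁) :
    Matrix (ι₁ × Fin d) (ι₁ × Fin d) ℂ :=
  tensorIdT N (maxEntangled d d d)

open Classical in
/-- Square root of a matrix (positive semidefinite case, junk value `0` otherwise). -/
def matSqrt {ι : Type} [Fintype ι] [DecidableEq ι] (A : Matrix ι ι ℂ) : Matrix ι ι ℂ :=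
  if h : A.PosSemidef then psdSqrt h else 0

/-- Fidelity `F(ρ,σ) = (tr √(√ρ σ √ρ))²`. -/
def fidelity {ι : Type} [Fintype ι] [DecidableEq ι] (ρ σ : Matrix ι ι ℂ) : ℝ :=
  ((matSqrt (matSqrt ρ * σ * matSqrt ρ)).trace.re) ^ 2

section OpTasks

variable {α₀ β₀ α₁ β₁ α₀' β₀' α₁' β₁' : Type}
variable [Fintype α₀] [DecidableEq α₀] [Fintype β₀] [DecidableEq β₀]
variable [Fintype α₁] [DecidableEq α₁] [Fintype β₁] [DecidableEq β₁]
variable [Fintype α₀'] [DecidableEq α₀'] [Fintype β₀'] [DecidableEq β₀']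
variable [Fintype α₁'] [DecidableEq α₁'] [Fintype β₁'] [DecidableEq β₁']

/-- One-shot dynamic entanglement cost under SEPPSC. -/
def oneShotCostSEPP (ε : ℝ) (N : MatMap (α₀ × β₀) (α₁ × β₁)) : ℝ :=
  sInf { t : ℝ | ∃ (K : ℕ) (Θ : Superchannel (Fin K) (Fin K) (Fin K) (Fin K) α₀ β₀ α₁ β₁),
    IsSEPPSC Θ ∧
    (1/2) * diamondNorm (fun X => Θ.apply (swapChannel K) X - N X) ≤ ε ∧
    t = Real.logb 2 ((K : ℝ) ^ 2) }

/-- One-shot distillable dynamic entanglement under SEPPSC. -/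
def oneShotDistillSEPP (ε : ℝ) (N : MatMap (α₀ × β₀) (α₁ × β₁)) : ℝ :=
  sSup { t : ℝ | ∃ (K : ℕ) (Θ : Superchannel α₀ β₀ α₁ β₁ (Fin K) (Fin K) (Fin K) (Fin K)),
    IsSEPPSC Θ ∧
    (1/2) * diamondNorm (fun X => Θ.apply N X - swapChannel K X) ≤ ε ∧
    t = Real.logb 2 ((K : ℝ) ^ 2) }

/-- Hypothesis-testing relative entropy of dynamic entanglement. -/
def EH (ε : ℝ) (N : MatMap (α₀ × β₀) (α₁ × β₁)) : ℝ :=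
  sSup { t : ℝ | ∃ (r : ℕ) (Ψ : Matrix ((α₀ × β₀) × Fin r) ((α₀ × β₀) × Fin r) ℂ)
      (Q : Matrix ((α₁ × β₁) × Fin r) ((α₁ × β₁) × Fin r) ℂ),
    IsPureState Ψ ∧ Q.PosSemidef ∧ ((1 : Matrix ((α₁ × β₁) × Fin r) ((α₁ × β₁) × Fin r) ℂ) - Q).PosSemidef ∧
    1 - ε ≤ ((tensorIdT N Ψ * Q).trace).re ∧
    t = sInf { u : ℝ | ∃ M : MatMap (α₀ × β₀) (α₁ × β₁), IsSepChannel M ∧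
        u = - Real.logb 2 (((tensorIdT M Ψ * Q).trace).re) } }

end OpTasks

/-- Reindexing a matrix map along equivalences of index types. -/
def reindexMap {ι₀ ι₁ κ₀ κ₁ : Type} (e₀ : ι₀ ≃ κ₀) (e₁ : ι₁ ≃ κ₁) (L : MatMap ι₀ ι₁) :
    MatMap κ₀ κ₁ :=
  fun X => Matrix.reindex e₁ e₁ (L (Matrix.reindex e₀.symm e₀.symm X))

section Cat

variable {α₀ β₀ α₁ β₁ : Type}
variable [Fintype α₀] [DecidableEq α₀] [Fintype β₀] [DecidableEq β₀]
variable [Fintype α₁] [DecidableEq α₁] [Fintype β₁] [DecidableEq β₁]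

/-- `N ⊗ F^L` as a bipartite channel for the cut `A C : B D` (catalyst `CD` of dimension `L×L`). -/
def tensorSwapCut (N : MatMap (α₀ × β₀) (α₁ × β₁)) (L : ℕ) :
    MatMap ((α₀ × Fin L) × (β₀ × Fin L)) ((α₁ × Fin L) × (β₁ × Fin L)) :=
  reindexMap (Equiv.prodProdProdComm α₀ β₀ (Fin L) (Fin L))
             (Equiv.prodProdProdComm α₁ β₁ (Fin L) (Fin L))
             (tensorMap N (swapChannel L))

/-- One-shot catalytic dynamic entanglement cost under δ-SEPPSC. -/
def catalyticCost (δ ε : ℝ) (N : MatMap (α₀ × β₀) (α₁ × β₁)) : ℝ :=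
  sInf { t : ℝ | ∃ (K L : ℕ)
      (Θ : Superchannel (Fin K × Fin L) (Fin K × Fin L) (Fin K × Fin L) (Fin K × Fin L)
            (α₀ × Fin L) (β₀ × Fin L) (α₁ × Fin L) (β₁ × Fin L)),
    IsDeltaSEPPSC δ Θ ∧
    ∃ N' : MatMap (α₀ × β₀) (α₁ × β₁), IsChannel N' ∧
      (1/2) * diamondNorm (fun X => N' X - N X) ≤ ε ∧
      Θ.apply (tensorSwapCut (swapChannel K) L) = tensorSwapCut N' L ∧
      t = Real.logb 2 ((K : ℝ) ^ 2) }

end Cat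

/-- Discrete Weyl operators on `ℂ^K`. -/
def weyl (K : ℕ) (k l : Fin K) : Matrix (Fin K) (Fin K) ℂ :=
  Matrix.of fun a s =>
    if (a : ℕ) = ((k : ℕ) + (s : ℕ)) % K
    then Complex.exp (2 * (Real.pi : ℂ) * Complex.I * ((s : ℕ) : ℂ) * ((l : ℕ) : ℂ) / (K : ℂ))
    else 0

/-- `n`-fold tensor power of a matrix. -/
def matPow {ι : Type} [Fintype ι] (X : Matrix ι ι ℂ) (n : ℕ) :
    Matrix (Fin n → ι) (Fin n → ι) ℂ :=
  Matrix.of fun f g => ∏ t, X (f t) (g t)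

/-- `n`-fold tensor power of a matrix map. -/
def powMap {ι₀ ι₁ : Type} [Fintype ι₀] [DecidableEq ι₀] (L : MatMap ι₀ ι₁) (n : ℕ) :
    MatMap (Fin n → ι₀) (Fin n → ι₁) :=
  fun X => Matrix.of fun f' g' => ∑ f : Fin n → ι₀, ∑ g : Fin n → ι₀,
    X f g * ∏ t, L (Matrix.single (f t) (g t) 1) (f' t) (g' t)

section Pow

variable {α₀ β₀ α₁ β₁ : Type}
variable [Fintype α₀] [DecidableEq α₀] [Fintype β₀] [DecidableEq β₀]
variable [Fintype α₁] [DecidableEq α₁] [Fintype β₁] [DecidableEq β₁]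

/-- `n`-fold tensor power of a bipartite channel, with cut `A^n : B^n`. -/
def powBi (N : MatMap (α₀ × β₀) (α₁ × β₁)) (n : ℕ) :
    MatMap ((Fin n → α₀) × (Fin n → β₀)) ((Fin n → α₁) × (Fin n → β₁)) :=
  reindexMap (Equiv.arrowProdEquivProdArrow (Fin n) (fun _ => α₀) (fun _ => β₀))
             (Equiv.arrowProdEquivProdArrow (Fin n) (fun _ => α₁) (fun _ => β₁))
             (powMap N n)

/-- `φ^{⊗n}` of a bipartite input-reference state, regrouped as
`((A₀ⁿ × B₀ⁿ) × refⁿ)`. -/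
def phiPow (n : ℕ)
    (φ : Matrix ((α₀ × β₀) × (α₀ × β₀)) ((α₀ × β₀) × (α₀ × β₀)) ℂ) :
    Matrix (((Fin n → α₀) × (Fin n → β₀)) × (Fin n → (α₀ × β₀)))
           (((Fin n → α₀) × (Fin n → β₀)) × (Fin n → (α₀ × β₀))) ℂ :=
  Matrix.reindex
    ((Equiv.arrowProdEquivProdArrow (Fin n) (fun _ => α₀ × β₀) (fun _ => α₀ × β₀)).trans
      (Equiv.prodCongr (Equiv.arrowProdEquivProdArrow (Fin n) (fun _ => α₀) (fun _ => β₀)) (Equiv.refl _)))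
    ((Equiv.arrowProdEquivProdArrow (Fin n) (fun _ => α₀ × β₀) (fun _ => α₀ × β₀)).trans
      (Equiv.prodCongr (Equiv.arrowProdEquivProdArrow (Fin n) (fun _ => α₀) (fun _ => β₀)) (Equiv.refl _)))
    (matPow φ n)

end Pow

open Classical in
/-- Base-2 matrix logarithm via the spectral decomposition (junk value `0` if not Hermitian). -/
def matLogb2 {ι : Type} [Fintype ι] [DecidableEq ι] (A : Matrix ι ι ℂ) : Matrix ι ι ℂ :=
  if h : A.IsHermitian then
    (h.eigenvectorUnitary : Matrix ι ι ℂ) *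
      Matrix.diagonal (fun i => ((Real.logb 2 (h.eigenvalues i) : ℝ) : ℂ)) *
      (star h.eigenvectorUnitary : Matrix ι ι ℂ)
  else 0

/-- Umegaki relative entropy `D(ρ‖σ) = tr ρ (log₂ ρ − log₂ σ)`. -/
def relEnt {ι : Type} [Fintype ι] [DecidableEq ι] (ρ σ : Matrix ι ι ℂ) : ℝ :=
  ((ρ * (matLogb2 ρ - matLogb2 σ)).trace).re

section Liberal

variable {α₀ β₀ α₁ β₁ : Type}
variable [Fintype α₀] [DecidableEq α₀] [Fintype β₀] [DecidableEq β₀]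
variable [Fintype α₁] [DecidableEq α₁] [Fintype β₁] [DecidableEq β₁]

/-- Zero-error one-shot dynamic entanglement cost under SEPPSC. -/
def zeroCostSEPP (N : MatMap (α₀ × β₀) (α₁ × β₁)) : ℝ :=
  sInf { t : ℝ | ∃ (K : ℕ) (Θ : Superchannel (Fin K) (Fin K) (Fin K) (Fin K) α₀ β₀ α₁ β₁),
    IsSEPPSC Θ ∧ Θ.apply (swapChannel K) = N ∧ t = Real.logb 2 ((K : ℝ) ^ 2) }

/-- Liberal (asymptotic) dynamic entanglement cost under SEPPSC. -/
def liberalCost (N : MatMap (α₀ × β₀) (α₁ × β₁)) : ℝ :=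
  limUnder (nhdsWithin (0 : ℝ) (Set.Ioi 0)) (fun ε : ℝ =>
    liminf (fun n : ℕ =>
      (1 / (n : ℝ)) * sSup { t : ℝ |
        ∃ φ : Matrix ((α₀ × β₀) × (α₀ × β₀)) ((α₀ × β₀) × (α₀ × β₀)) ℂ, IsState φ ∧
          t = sInf { u : ℝ |
            ∃ N'' : MatMap ((Fin n → α₀) × (Fin n → β₀)) ((Fin n → α₁) × (Fin n → β₁)),
              IsChannel N'' ∧
              (1/2) * traceNorm
                (tensorIdT N'' (phiPow n φ) - tensorIdT (powBi N n) (phiPow n φ)) ≤ ε ∧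
              u = zeroCostSEPP N'' } }) atTop)

/-- Liberal regularized relative entropy with respect to separable channels. -/
def liberalRelEnt (N : MatMap (α₀ × β₀) (α₁ × β₁)) : ℝ :=
  limUnder atTop (fun n : ℕ =>
    (1 / (n : ℝ)) * sSup { t : ℝ |
      ∃ φ : Matrix ((α₀ × β₀) × (α₀ × β₀)) ((α₀ × β₀) × (α₀ × β₀)) ℂ, IsState φ ∧
        t = sInf { u : ℝ | ∃ M : MatMap (α₀ × β₀) (α₁ × β₁), IsSepChannel M ∧
          u = relEnt (tensorIdT (powBi N n) (phiPow n φ))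
                     (tensorIdT (powBi M n) (phiPow n φ)) } })

end Liberal

open scoped ComplexStarModule

/-!
A superchannel acts linearly on channels, so it maps an admissible decomposition
`(N + s M) / (1 + s)` of `N` to the decomposition `(Θ[N] + s Θ[M]) / (1 + s)` of `Θ[N]`; a
separability-preserving `Θ` keeps `Θ[M]` and the mixture separable, and any superchannel maps
channels to channels. Hence every weight admissible for `N` is admissible for `Θ[N]`, and the
infima compare as soon as the admissible set of `N` is nonempty (otherwise `sInf ∅ = 0` and there
is nothing to compare with).

Nonemptiness holds because the identity is an interior point of the cone generated by products
`V ⊗ W` of positive semidefinite matrices: every Hermitian matrix is a real combination of such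
products, and `c • 1 - V ⊗ W` lies in the cone for `c` large. Applied to the Choi matrix of `N`,
this shows that mixing `N` with enough of the completely depolarizing channel, itself separable,
produces a separable channel.
-/

section LinearMaps

variable {ι₀ ι₁ : Type}

def IsLinearFun.toLinearMap {L : MatMap ι₀ ι₁} (hL : IsLinearFun L) :
    Matrix ι₀ ι₀ ℂ →ₗ[ℂ] Matrix ι₁ ι₁ ℂ where
  toFun := L
  map_add' X Y := by simpa using hL 1 X Y
  map_smul' c X := by
    have h0 : L 0 = 0 := by simpa using hL 1 0 0
    simpa [h0] using hL c X 0

lemma IsLinearFun.map_add {L : MatMap ι₀ ι₁} (hL : IsLinearFun L) (X Y : Matrix ι₀ ι₀ ℂ) :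
    L (X + Y) = L X + L Y :=
  hL.toLinearMap.map_add X Y

lemma IsLinearFun.map_smul {L : MatMap ι₀ ι₁} (hL : IsLinearFun L) (c : ℂ)
    (X : Matrix ι₀ ι₀ ℂ) : L (c • X) = c • L X :=
  hL.toLinearMap.map_smul c X

lemma IsLinearFun.map_real_smul {L : MatMap ι₀ ι₁} (hL : IsLinearFun L) (r : ℝ)
    (X : Matrix ι₀ ι₀ ℂ) : L (r • X) = r • L X :=
  hL.toLinearMap.map_smul_of_tower r X

lemma IsLinearFun.map_sum {L : MatMap ι₀ ι₁} (hL : IsLinearFun L) {κ : Type*} (s : Finset κ)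
    (X : κ → Matrix ι₀ ι₀ ℂ) : L (∑ k ∈ s, X k) = ∑ k ∈ s, L (X k) :=
  _root_.map_sum hL.toLinearMap X s

lemma IsLinearFun.mix {N M : MatMap ι₀ ι₁} (hN : IsLinearFun N) (hM : IsLinearFun M) (s : ℝ) :
    IsLinearFun (fun X => (1 + s)⁻¹ • (N X + s • M X)) := by
  intro c X Y
  simp only [hN c X Y, hM c X Y, smul_add, smul_comm _ c]
  abel

lemma IsLinearFun.tensorIdT {E : MatMap ι₀ ι₁} (hE : IsLinearFun E) (ρ : Type) :
    IsLinearFun (tensorIdT E (ρ := ρ)) := by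
  intro c X Y
  ext p q
  have hslice : (of fun i j => (c • X + Y) (i, p.2) (j, q.2))
      = c • (of fun i j => X (i, p.2) (j, q.2)) + of fun i j => Y (i, p.2) (j, q.2) := by
    ext; simp
  show E _ p.1 q.1 = _
  rw [hslice, hE]
  rfl

lemma tensorIdT_mix (N M : MatMap ι₀ ι₁) (s : ℝ) {ρ : Type} (Y : Matrix (ι₀ × ρ) (ι₀ × ρ) ℂ) :
    tensorIdT (fun X => (1 + s)⁻¹ • (N X + s • M X)) Y
      = (1 + s)⁻¹ • (tensorIdT N Y + s • tensorIdT M Y) := by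
  ext p q
  simp [tensorIdT]

end LinearMaps

section Channels

variable {ι₀ ι₁ ι₂ : Type} [Fintype ι₀] [Fintype ι₁] [Fintype ι₂]

lemma IsChannel.comp {L₁ : MatMap ι₀ ι₁} {L₂ : MatMap ι₁ ι₂}
    (h₁ : IsChannel L₁) (h₂ : IsChannel L₂) : IsChannel (fun X => L₂ (L₁ X)) :=
  ⟨fun c X Y => by simp only [h₁.1 c X Y, h₂.1 c _ _],
    fun r X hX => h₂.2.1 r _ (h₁.2.1 r X hX),
    fun X => (h₂.2.2 _).trans (h₁.2.2 X)⟩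

lemma IsChannel.mix {N M : MatMap ι₀ ι₁} (hN : IsChannel N) (hM : IsChannel M)
    {s : ℝ} (hs : 0 ≤ s) : IsChannel (fun X => (1 + s)⁻¹ • (N X + s • M X)) := by
  refine ⟨hN.1.mix hM.1 s, fun r X hX => ?_, fun X => ?_⟩
  · rw [tensorIdT_mix]
    exact ((hN.2.1 r X hX).add ((hM.2.1 r X hX).smul hs)).smul (by positivity)
  · have : (1 + s) ≠ 0 := by positivity
    rw [trace_smul, trace_add, trace_smul, hN.2.2, hM.2.2,
      show X.trace + s • X.trace = (1 + s) • X.trace by rw [add_smul, one_smul]]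
    exact inv_smul_smul₀ this _

lemma IsCompletelyPositive.tensorIdT {E : MatMap ι₀ ι₁} (hE : IsCompletelyPositive E) (e : ℕ) :
    IsCompletelyPositive (tensorIdT E (ρ := Fin e)) := by
  intro r X hX
  let σ : ∀ ι : Type, (ι × Fin e) × Fin r ≃ ι × Fin (e * r) := fun ι =>
    (Equiv.prodAssoc ι (Fin e) (Fin r)).trans (Equiv.prodCongr (Equiv.refl ι) finProdFinEquiv)
  have hreindex : DynEnt.tensorIdT (DynEnt.tensorIdT E) X
      = (DynEnt.tensorIdT E (reindex (σ ι₀) (σ ι₀) X)).submatrix (σ ι₁) (σ ι₁) := by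
    ext ⟨⟨p, c⟩, m⟩ ⟨⟨q, d⟩, n⟩
    simp [DynEnt.tensorIdT, σ, -finProdFinEquiv_symm_apply]
  rw [hreindex]
  exact (hE _ _ (hX.submatrix _)).submatrix _

lemma IsTracePreserving.tensorIdT {E : MatMap ι₀ ι₁} (hE : IsTracePreserving E) (ρ : Type)
    [Fintype ρ] : IsTracePreserving (tensorIdT E (ρ := ρ)) := by
  intro X
  simp only [trace, diag, Fintype.sum_prod_type_right]
  exact Finset.sum_congr rfl fun c _ => hE (of fun i j => X (i, c) (j, c))

lemma IsChannel.tensorIdT {E : MatMap ι₀ ι₁} (hE : IsChannel E) (e : ℕ) :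
    IsChannel (tensorIdT E (ρ := Fin e)) :=
  ⟨hE.1.tensorIdT _, hE.2.1.tensorIdT e, hE.2.2.tensorIdT _⟩

end Channels

section Superchannels

variable {α₀ β₀ α₁ β₁ α₀' β₀' α₁' β₁' : Type}
variable [Fintype α₀] [Fintype β₀] [Fintype α₁] [Fintype β₁]
variable [Fintype α₀'] [Fintype β₀'] [Fintype α₁'] [Fintype β₁']

lemma Superchannel.isChannel_apply (Θ : Superchannel α₀ β₀ α₁ β₁ α₀' β₀' α₁' β₁')
    {E : MatMap (α₀ × β₀) (α₁ × β₁)} (hE : IsChannel E) : IsChannel (Θ.apply E) :=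
  (Θ.pre_channel.comp (hE.tensorIdT Θ.e)).comp Θ.post_channel

lemma Superchannel.apply_mix (Θ : Superchannel α₀ β₀ α₁ β₁ α₀' β₀' α₁' β₁')
    (N M : MatMap (α₀ × β₀) (α₁ × β₁)) (s : ℝ) :
    Θ.apply (fun X => (1 + s)⁻¹ • (N X + s • M X))
      = fun X => (1 + s)⁻¹ • (Θ.apply N X + s • Θ.apply M X) := by
  funext X
  have hpost := Θ.post_channel.1
  simp only [Superchannel.apply, tensorIdT_mix, hpost.map_real_smul, hpost.map_add]

end Superchannels

section Choi

variable {ι₀ ι₁ : Type} [Fintype ι₀]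

def ofChoi (C : Matrix (ι₁ × ι₀) (ι₁ × ι₀) ℂ) : MatMap ι₀ ι₁ :=
  fun X => of fun p q => ∑ i, ∑ j, X i j * C (p, i) (q, j)

lemma ofChoi_isLinearFun (C : Matrix (ι₁ × ι₀) (ι₁ × ι₀) ℂ) : IsLinearFun (ofChoi C) := by
  intro c X Y
  ext p q
  simp only [ofChoi, of_apply, Matrix.add_apply, Matrix.smul_apply, smul_eq_mul, add_mul,
    mul_assoc, Finset.sum_add_distrib, Finset.mul_sum]

lemma ofChoi_sum {κ : Type*} (s : Finset κ) (C : κ → Matrix (ι₁ × ι₀) (ι₁ × ι₀) ℂ)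
    (X : Matrix ι₀ ι₀ ℂ) : ofChoi (∑ k ∈ s, C k) X = ∑ k ∈ s, ofChoi (C k) X := by
  ext p q
  simp only [ofChoi, of_apply, Matrix.sum_apply, Finset.mul_sum]
  simp_rw [Finset.sum_comm (s := s)]

variable [DecidableEq ι₀]

def choiMatrix (L : MatMap ι₀ ι₁) : Matrix (ι₁ × ι₀) (ι₁ × ι₀) ℂ :=
  of fun p q => L (single p.2 q.2 1) p.1 q.1

lemma ofChoi_single (C : Matrix (ι₁ × ι₀) (ι₁ × ι₀) ℂ) (i j : ι₀) (p q : ι₁) :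
    ofChoi C (single i j 1) p q = C (p, i) (q, j) := by
  simp [ofChoi, single_apply, ite_and]

lemma IsLinearFun.ofChoi_choiMatrix {L : MatMap ι₀ ι₁} (hL : IsLinearFun L) :
    ofChoi (choiMatrix L) = L := by
  funext X
  have hX : X = ∑ i, ∑ j, X i j • single i j 1 := by
    simpa [smul_single] using matrix_eq_sum_single X
  rw [congrArg L hX, hL.map_sum]
  simp only [hL.map_sum, hL.map_smul]
  ext p q
  simp [ofChoi, choiMatrix, Matrix.sum_apply]

variable [Fintype ι₁]

lemma ofChoi_isCompletelyPositive {C : Matrix (ι₁ × ι₀) (ι₁ × ι₀) ℂ} (hC : C.PosSemidef) :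
    IsCompletelyPositive (ofChoi C) := by
  classical
  intro r X hX
  obtain ⟨B, rfl⟩ : ∃ B : Matrix (ι₁ × ι₀) (ι₁ × ι₀) ℂ, C = star B * B := by
    open scoped MatrixOrder in exact CStarAlgebra.nonneg_iff_eq_star_mul_self.mp hC.nonneg
  -- Kraus operators of `ofChoi (Bᴴ B)`, one for each row of `B`
  let K : ι₁ × ι₀ → Matrix (ι₁ × Fin r) (ι₀ × Fin r) ℂ := fun a =>
    (of fun p i => star (B a (p, i))) ⊗ₖ (1 : Matrix (Fin r) (Fin r) ℂ)
  have hKraus : tensorIdT (ofChoi (star B * B)) X = ∑ a, K a * (X * (K a)ᴴ) := by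
    ext ⟨p, m⟩ ⟨q, n⟩
    simp only [tensorIdT, ofChoi, of_apply, Matrix.mul_apply, star_apply, RCLike.star_def,
      mul_comm, Finset.mul_sum, Matrix.sum_apply, kroneckerMap_apply, one_apply, ite_mul, one_mul,
      zero_mul, conjTranspose_apply, apply_ite (starRingEnd ℂ), RingHomCompTriple.comp_apply,
      RingHom.id_apply, map_zero, mul_ite, mul_zero, Fintype.sum_prod_type (f := fun x : ι₀ × Fin r => _),
      Finset.sum_ite_eq, Finset.mem_univ, if_true, Finset.sum_const_zero, K]
    simp only [Finset.sum_mul, mul_assoc]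
    exact Finset.sum_comm_cycle
  rw [hKraus]
  exact posSemidef_sum _ fun a _ =>
    Matrix.mul_assoc (K a) X (K a)ᴴ ▸ hX.mul_mul_conjTranspose_same (K a)

lemma IsCompletelyPositive.choiMatrix_posSemidef {L : MatMap ι₀ ι₁}
    (hL : IsCompletelyPositive L) : (choiMatrix L).PosSemidef := by
  let e := Fintype.equivFin ι₀
  -- the unnormalised maximally entangled vector `∑ i, |i⟩ ⊗ |e i⟩`
  let ω : ι₀ × Fin (Fintype.card ι₀) → ℂ := fun x => if e x.1 = x.2 then 1 else 0
  have hchoi : choiMatrix L = (DynEnt.tensorIdT L (vecMulVec ω (star ω))).submatrix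
      (Prod.map id e) (Prod.map id e) := by
    ext ⟨p, i⟩ ⟨q, j⟩
    simp only [choiMatrix, DynEnt.tensorIdT, of_apply, submatrix_apply, Prod.map_apply, id_eq]
    congr 2
    ext a b
    simp only [single_apply, ite_and, vecMulVec_apply, e.injective.eq_iff, Pi.star_apply,
      RCLike.star_def, MonoidWithZeroHom.map_ite_one_zero, mul_ite, mul_one, mul_zero, of_apply, ω]
    aesop
  rw [hchoi]
  exact (hL _ _ (posSemidef_vecMulVec_self_star ω)).submatrix _

end Choi

lemma tensorMap_ofChoi {α₀ β₀ α₁ β₁ : Type} [Fintype α₀] [DecidableEq α₀] [Fintype β₀]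
    [DecidableEq β₀] (P : Matrix (α₁ × α₀) (α₁ × α₀) ℂ) (Q : Matrix (β₁ × β₀) (β₁ × β₀) ℂ) :
    tensorMap (ofChoi P) (ofChoi Q)
      = ofChoi ((P ⊗ₖ Q).submatrix (Equiv.prodProdProdComm α₁ β₁ α₀ β₀)
          (Equiv.prodProdProdComm α₁ β₁ α₀ β₀)) := by
  funext X
  ext ⟨p, r⟩ ⟨q, s⟩
  simp only [tensorMap, Matrix.sum_apply, Matrix.smul_apply, kronecker_apply, ofChoi_single]
  simp only [ofChoi, of_apply, kronecker_apply, submatrix_apply, Equiv.prodProdProdComm_apply,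
    smul_eq_mul, Fintype.sum_prod_type]
  exact Finset.sum_congr rfl fun _ _ => Finset.sum_comm

lemma mem_span_real_of_mem_span_complex {A : Type*} [AddCommGroup A] [Module ℂ A]
    [StarAddMonoid A] [StarModule ℂ A] {S : Set A} (hS : ∀ x ∈ S, IsSelfAdjoint x) {a : A}
    (ha : IsSelfAdjoint a) (h : a ∈ Submodule.span ℂ S) : a ∈ Submodule.span ℝ S := by
  suffices ∀ b ∈ Submodule.span ℂ S,
      (ℜ b : A) ∈ Submodule.span ℝ S ∧ (ℑ b : A) ∈ Submodule.span ℝ S by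
    simpa [ha.coe_realPart] using (this a h).1
  intro b hb
  induction hb using Submodule.span_induction with
  | mem x hx =>
    rw [(hS x hx).coe_realPart, (hS x hx).imaginaryPart]
    exact ⟨Submodule.subset_span hx, by simp⟩
  | zero => simp
  | add x y _ _ hx hy => simpa using ⟨add_mem hx.1 hy.1, add_mem hx.2 hy.2⟩
  | smul z x _ hx =>
    rw [realPart_smul, imaginaryPart_smul]
    exact ⟨sub_mem (Submodule.smul_mem _ _ hx.1) (Submodule.smul_mem _ _ hx.2),
      add_mem (Submodule.smul_mem _ _ hx.2) (Submodule.smul_mem _ _ hx.1)⟩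

section PosSemidefSpan

variable {κ : Type} [Fintype κ] [DecidableEq κ]

lemma exists_smul_one_sub_posSemidef {V : Matrix κ κ ℂ} (hV : V.IsHermitian) :
    ∃ c : ℝ, 0 ≤ c ∧ (c • (1 : Matrix κ κ ℂ) - V).PosSemidef := by
  open scoped MatrixOrder Matrix.Norms.L2Operator in
  refine ⟨‖V‖, norm_nonneg V, Matrix.nonneg_iff_posSemidef.mp (sub_nonneg.mpr ?_)⟩
  simpa [Algebra.algebraMap_eq_smul_one] using IsSelfAdjoint.le_algebraMap_norm_self hV

lemma mem_span_posSemidef (M : Matrix κ κ ℂ) :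
    M ∈ Submodule.span ℂ {V : Matrix κ κ ℂ | V.PosSemidef} := by
  have hself : ∀ V : Matrix κ κ ℂ, IsSelfAdjoint V →
      V ∈ Submodule.span ℂ {V : Matrix κ κ ℂ | V.PosSemidef} := by
    intro V hV
    obtain ⟨c, -, hcV⟩ := exists_smul_one_sub_posSemidef hV
    rw [← sub_sub_cancel (c • (1 : Matrix κ κ ℂ)) V]
    exact sub_mem (Submodule.smul_of_tower_mem _ c (Submodule.subset_span PosSemidef.one))
      (Submodule.subset_span hcV)
  rw [← realPart_add_I_smul_imaginaryPart M]
  exact add_mem (hself _ (ℜ M).2) (Submodule.smul_mem _ _ (hself _ (ℑ M).2))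

end PosSemidefSpan

section SeparableCone

variable {κ μ : Type}

variable (κ μ) in
def sepCone : PointedCone ℝ (Matrix (κ × μ) (κ × μ) ℂ) :=
  PointedCone.hull ℝ (Set.image2 (· ⊗ₖ ·) {V | V.PosSemidef} {W | W.PosSemidef})

lemma kronecker_mem_sepCone {V : Matrix κ κ ℂ} {W : Matrix μ μ ℂ} (hV : V.PosSemidef)
    (hW : W.PosSemidef) : V ⊗ₖ W ∈ sepCone κ μ :=
  PointedCone.subset_hull (Set.mem_image2_of_mem hV hW)

variable [DecidableEq κ] [DecidableEq μ]

lemma smul_one_mem_sepCone {c : ℝ} (hc : 0 ≤ c) :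
    c • (1 : Matrix (κ × μ) (κ × μ) ℂ) ∈ sepCone κ μ :=
  (sepCone κ μ).smul_mem hc (one_kronecker_one (α := ℂ) (m := κ) (n := μ) ▸
    kronecker_mem_sepCone PosSemidef.one PosSemidef.one)

variable [Fintype κ] [Fintype μ]

lemma mem_span_kronecker_posSemidef (M : Matrix (κ × μ) (κ × μ) ℂ) :
    M ∈ Submodule.span ℂ (Set.image2 (· ⊗ₖ ·) {V : Matrix κ κ ℂ | V.PosSemidef}
      {W : Matrix μ μ ℂ | W.PosSemidef}) := by
  have hspan := Submodule.map₂_span_span ℂ (kroneckerBilinear (R := ℂ))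
    {V : Matrix κ κ ℂ | V.PosSemidef} {W : Matrix μ μ ℂ | W.PosSemidef}
  have hkron : ∀ (V : Matrix κ κ ℂ) (W : Matrix μ μ ℂ), kroneckerBilinear (R := ℂ) V W = V ⊗ₖ W :=
    fun _ _ => rfl
  simp only [hkron] at hspan
  rw [← hspan, matrix_eq_sum_single M]
  refine Submodule.sum_mem _ fun a _ => Submodule.sum_mem _ fun b _ => ?_
  rw [← mul_one (M a b), ← smul_eq_mul, ← smul_single, ← mul_one (1 : ℂ),
    ← single_kronecker_single a.1 b.1 a.2 b.2]
  exact Submodule.smul_mem _ _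
    (Submodule.apply_mem_map₂ _ (mem_span_posSemidef _) (mem_span_posSemidef _))

lemma exists_neg_kronecker_add_smul_one_mem_sepCone {V : Matrix κ κ ℂ} {W : Matrix μ μ ℂ}
    (hV : V.PosSemidef) (hW : W.PosSemidef) :
    ∃ c : ℝ, -(V ⊗ₖ W) + c • (1 : Matrix (κ × μ) (κ × μ) ℂ) ∈ sepCone κ μ := by
  obtain ⟨a, -, ha⟩ := exists_smul_one_sub_posSemidef hV.1
  obtain ⟨b, hb, hb'⟩ := exists_smul_one_sub_posSemidef hW.1
  refine ⟨a * b, ?_⟩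
  have hsplit : -(V ⊗ₖ W) + (a * b) • (1 : Matrix (κ × μ) (κ × μ) ℂ)
      = (a • 1 - V) ⊗ₖ (b • (1 : Matrix μ μ ℂ)) + V ⊗ₖ (b • 1 - W) := by
    ext ⟨i, k⟩ ⟨j, l⟩
    simp only [Matrix.add_apply, Matrix.neg_apply, Matrix.sub_apply, Matrix.smul_apply,
      kronecker_apply, one_apply, Prod.mk.injEq, ite_and]
    split_ifs <;> simp only [smul_zero, add_zero, zero_sub, zero_add, Complex.real_smul,
      Complex.ofReal_mul, mul_one, mul_zero, mul_neg, neg_mul] <;> ring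
  rw [hsplit]
  exact add_mem (kronecker_mem_sepCone ha (PosSemidef.one.smul hb)) (kronecker_mem_sepCone hV hb')

lemma exists_add_smul_one_mem_sepCone_of_mem_span {M : Matrix (κ × μ) (κ × μ) ℂ}
    (hM : M ∈ Submodule.span ℝ (Set.image2 (· ⊗ₖ ·) {V : Matrix κ κ ℂ | V.PosSemidef}
      {W : Matrix μ μ ℂ | W.PosSemidef})) :
    (∃ c : ℝ, M + c • 1 ∈ sepCone κ μ) ∧ ∃ c : ℝ, -M + c • 1 ∈ sepCone κ μ := by
  induction hM using Submodule.span_induction with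
  | mem _ hx =>
    obtain ⟨V, hV, W, hW, rfl⟩ := hx
    exact ⟨⟨0, by simpa using kronecker_mem_sepCone hV hW⟩,
      exists_neg_kronecker_add_smul_one_mem_sepCone hV hW⟩
  | zero => exact ⟨⟨0, by simp⟩, ⟨0, by simp⟩⟩
  | add M₁ M₂ _ _ h₁ h₂ =>
    obtain ⟨⟨c₁, hc₁⟩, ⟨d₁, hd₁⟩⟩ := h₁
    obtain ⟨⟨c₂, hc₂⟩, ⟨d₂, hd₂⟩⟩ := h₂
    refine ⟨⟨c₁ + c₂, ?_⟩, ⟨d₁ + d₂, ?_⟩⟩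
    · convert add_mem hc₁ hc₂ using 1
      module
    · convert add_mem hd₁ hd₂ using 1
      module
  | smul r M _ h =>
    obtain ⟨⟨c, hc⟩, ⟨d, hd⟩⟩ := h
    rcases le_total 0 r with hr | hr
    · refine ⟨⟨r * c, ?_⟩, ⟨r * d, ?_⟩⟩
      · convert (sepCone κ μ).smul_mem hr hc using 1
        module
      · convert (sepCone κ μ).smul_mem hr hd using 1
        module
    · refine ⟨⟨-r * d, ?_⟩, ⟨-r * c, ?_⟩⟩
      · convert (sepCone κ μ).smul_mem (neg_nonneg.mpr hr) hd using 1
        module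
      · convert (sepCone κ μ).smul_mem (neg_nonneg.mpr hr) hc using 1
        module

lemma exists_add_smul_one_mem_sepCone {H : Matrix (κ × μ) (κ × μ) ℂ} (hH : H.IsHermitian) :
    ∃ c : ℝ, 0 ≤ c ∧ H + c • 1 ∈ sepCone κ μ := by
  have hreal : H ∈ Submodule.span ℝ (Set.image2 (· ⊗ₖ ·) {V : Matrix κ κ ℂ | V.PosSemidef}
      {W : Matrix μ μ ℂ | W.PosSemidef}) := by
    refine mem_span_real_of_mem_span_complex ?_ hH (mem_span_kronecker_posSemidef H)
    rintro _ ⟨V, hV, W, hW, rfl⟩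
    exact (hV.kronecker hW).1
  obtain ⟨c, hc⟩ := (exists_add_smul_one_mem_sepCone_of_mem_span hreal).1
  refine ⟨max c 0, le_max_right c 0, ?_⟩
  rw [← sub_add_cancel (max c 0) c, add_comm (max c 0 - c), add_smul, ← add_assoc]
  exact add_mem hc (smul_one_mem_sepCone (sub_nonneg.mpr (le_max_left c 0)))

end SeparableCone

section SeparableChannels

variable {α₀ β₀ α₁ β₁ : Type} [DecidableEq α₀] [DecidableEq β₀]

def bipartiteChoi (N : MatMap (α₀ × β₀) (α₁ × β₁)) :
    Matrix ((α₁ × α₀) × (β₁ × β₀)) ((α₁ × α₀) × (β₁ × β₀)) ℂ :=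
  reindex (Equiv.prodProdProdComm α₁ β₁ α₀ β₀) (Equiv.prodProdProdComm α₁ β₁ α₀ β₀)
    (choiMatrix N)

lemma bipartiteChoi_mix (N M : MatMap (α₀ × β₀) (α₁ × β₁)) (s : ℝ) :
    bipartiteChoi (fun X => (1 + s)⁻¹ • (N X + s • M X))
      = (1 + s)⁻¹ • (bipartiteChoi N + s • bipartiteChoi M) := by
  ext x y
  simp [bipartiteChoi, choiMatrix]

variable [Fintype α₀] [Fintype β₀] [Fintype α₁] [Fintype β₁]

lemma IsChannel.isSepChannel_of_mem_sepCone {N : MatMap (α₀ × β₀) (α₁ × β₁)} (hN : IsChannel N)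
    (h : bipartiteChoi N ∈ sepCone (α₁ × α₀) (β₁ × β₀)) : IsSepChannel N := by
  obtain ⟨n, f, g, hsum⟩ := Submodule.mem_span_set'.mp h
  choose V hV W hW hVW using fun k => (g k).2
  refine ⟨hN, n, fun k => ofChoi ((f k : ℝ) • V k), fun k => ofChoi (W k),
    fun k => ⟨ofChoi_isLinearFun _, ofChoi_isCompletelyPositive ((hV k).smul (f k).2),
      ofChoi_isLinearFun _, ofChoi_isCompletelyPositive (hW k)⟩, fun X => ?_⟩
  have hchoi : choiMatrix N = ∑ k, ((((f k : ℝ) • V k) ⊗ₖ W k).submatrix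
      (Equiv.prodProdProdComm α₁ β₁ α₀ β₀) (Equiv.prodProdProdComm α₁ β₁ α₀ β₀)) := by
    ext x y
    have := congrFun (congrFun hsum (Equiv.prodProdProdComm α₁ β₁ α₀ β₀ x))
      (Equiv.prodProdProdComm α₁ β₁ α₀ β₀ y)
    simp only [bipartiteChoi, reindex_apply, submatrix_apply, Equiv.symm_apply_apply] at this
    rw [← this]
    simp [Matrix.sum_apply, ← hVW, smul_kronecker]
  rw [← hN.1.ofChoi_choiMatrix, hchoi, ofChoi_sum]
  simp only [tensorMap_ofChoi]

lemma IsChannel.isSepChannel_of_isEmpty [IsEmpty (α₁ × β₁)] {N : MatMap (α₀ × β₀) (α₁ × β₁)}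
    (hN : IsChannel N) : IsSepChannel N := by
  refine hN.isSepChannel_of_mem_sepCone ?_
  convert zero_mem (sepCone (α₁ × α₀) (β₁ × β₀))
  ext ⟨⟨p, _⟩, ⟨r, _⟩⟩
  exact isEmptyElim (p, r)

end SeparableChannels

section Depolarizing

variable {ι₀ ι₁ : Type} [Fintype ι₀] [DecidableEq ι₀] [Fintype ι₁] [DecidableEq ι₁]

def depolarizing : MatMap ι₀ ι₁ := fun X => (X.trace / Fintype.card ι₁) • 1

lemma choiMatrix_depolarizing :
    choiMatrix (depolarizing : MatMap ι₀ ι₁) = (Fintype.card ι₁ : ℝ)⁻¹ • 1 := by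
  ext ⟨p, i⟩ ⟨q, j⟩
  by_cases hij : i = j <;> by_cases hpq : p = q <;>
    simp [choiMatrix, depolarizing, one_apply, trace_single_eq_of_ne, hij, hpq]

lemma depolarizing_isChannel [Nonempty ι₁] : IsChannel (depolarizing : MatMap ι₀ ι₁) := by
  have hlin : IsLinearFun (depolarizing : MatMap ι₀ ι₁) := by
    intro c X Y
    simp only [depolarizing, trace_add, trace_smul, smul_eq_mul, add_div, mul_div_assoc, add_smul,
      smul_smul]
  refine ⟨hlin, ?_, fun X => ?_⟩
  · rw [← hlin.ofChoi_choiMatrix, choiMatrix_depolarizing]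
    exact ofChoi_isCompletelyPositive (PosSemidef.one.smul (by positivity))
  · have : (Fintype.card ι₁ : ℂ) ≠ 0 := Nat.cast_ne_zero.mpr Fintype.card_ne_zero
    simp [depolarizing, trace_smul, trace_one, div_mul_cancel₀ _ this]

end Depolarizing

section Witness

variable {α₀ β₀ α₁ β₁ : Type} [Fintype α₀] [DecidableEq α₀] [Fintype β₀] [DecidableEq β₀]
  [Fintype α₁] [DecidableEq α₁] [Fintype β₁] [DecidableEq β₁]

lemma bipartiteChoi_depolarizing :
    bipartiteChoi (depolarizing : MatMap (α₀ × β₀) (α₁ × β₁))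
      = (Fintype.card (α₁ × β₁) : ℝ)⁻¹ • 1 := by
  rw [bipartiteChoi, choiMatrix_depolarizing, reindex_apply, submatrix_smul, Pi.smul_apply,
    Pi.smul_apply, submatrix_one_equiv]

lemma depolarizing_isSepChannel [Nonempty (α₁ × β₁)] :
    IsSepChannel (depolarizing : MatMap (α₀ × β₀) (α₁ × β₁)) := by
  refine depolarizing_isChannel.isSepChannel_of_mem_sepCone ?_
  rw [bipartiteChoi_depolarizing]
  exact smul_one_mem_sepCone (by positivity)

lemma IsChannel.exists_isSepChannel_mix {N : MatMap (α₀ × β₀) (α₁ × β₁)} (hN : IsChannel N) :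
    ∃ s : ℝ, 0 ≤ s ∧ ∃ M : MatMap (α₀ × β₀) (α₁ × β₁), IsSepChannel M ∧
      IsSepChannel (fun X => (1 + s)⁻¹ • (N X + s • M X)) := by
  rcases isEmpty_or_nonempty (α₁ × β₁) with _ | _
  · exact ⟨0, le_rfl, N, hN.isSepChannel_of_isEmpty, (hN.mix hN le_rfl).isSepChannel_of_isEmpty⟩
  have hH : (bipartiteChoi N).IsHermitian := (hN.2.1.choiMatrix_posSemidef.submatrix _).1
  obtain ⟨c, hc, hmem⟩ := exists_add_smul_one_mem_sepCone hH
  have hd : 0 < (Fintype.card (α₁ × β₁) : ℝ) := by exact_mod_cast Fintype.card_pos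
  refine ⟨c * Fintype.card (α₁ × β₁), by positivity, depolarizing, depolarizing_isSepChannel,
    (hN.mix depolarizing_isChannel (by positivity)).isSepChannel_of_mem_sepCone ?_⟩
  rw [bipartiteChoi_mix, bipartiteChoi_depolarizing, smul_smul, mul_inv_cancel_right₀ hd.ne']
  exact (sepCone _ _).smul_mem (by positivity) hmem

end Witness

section Statements


variable {α₀ β₀ α₁ β₁ α₀' β₀' α₁' β₁' : Type}
variable [Fintype α₀] [DecidableEq α₀] [Fintype β₀] [DecidableEq β₀]
variable [Fintype α₁] [DecidableEq α₁] [Fintype β₁] [DecidableEq β₁]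
variable [Fintype α₀'] [DecidableEq α₀'] [Fintype β₀'] [DecidableEq β₀']
variable [Fintype α₁'] [DecidableEq α₁'] [Fintype β₁'] [DecidableEq β₁']

theorem stmt0
    (Θ : Superchannel α₀ β₀ α₁ β₁ α₀' β₀' α₁' β₁') (hΘ : IsSEPPSC Θ)
    (N : MatMap (α₀ × β₀) (α₁ × β₁)) (hN : IsChannel N) :
    stdRobustness (Θ.apply N) ≤ stdRobustness N ∧
    genRobustness (Θ.apply N) ≤ genRobustness N := by
  obtain ⟨s₀, hs₀, M₀, hM₀, hmix₀⟩ := hN.exists_isSepChannel_mix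
  constructor
  · refine csInf_le_csInf ⟨0, fun _ hs => hs.1⟩ ⟨s₀, hs₀, M₀, hM₀, hmix₀⟩ ?_
    rintro s ⟨hs, M, hM, hmix⟩
    exact ⟨hs, Θ.apply M, hΘ M hM, Θ.apply_mix N M s ▸ hΘ _ hmix⟩
  · refine csInf_le_csInf ⟨0, fun _ hs => hs.1⟩ ⟨s₀, hs₀, M₀, hM₀.1, hmix₀⟩ ?_
    rintro s ⟨hs, M, hM, hmix⟩
    exact ⟨hs, Θ.apply M, Θ.isChannel_apply hM, Θ.apply_mix N M s ▸ hΘ _ hmix⟩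

end Statements

end DynEnt
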